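/- Let h > 0 and δ ∈ [0,1]. Then for every u : ℤ × ℤ → ℝ and every (i,j) ∈ ℤ × ℤ, the discrete erosion speed satisfies 0 ≤ (E u)(i,j) ≤ ((√2·(1−δ) + δ)/h) · max(0, max_{(a,b)∈{−1,0,1}², (a,b)≠(0,0)} (u(i,j) − u(i+a, j+b))). -/

import Mathlib

/-- The weighted Rouy–Tourin discretisation of the erosion speed `|∇u|` (downwind version). -/
noncomputable def erosionSpeed (h δ : ℝ) (u : ℤ × ℤ → ℝ) (p : ℤ × ℤ) : ℝ :=
  ((1 - δ) / h) *
      Real.sqrt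
        ((max (u p - u (p.1 + 1, p.2)) (max (u p - u (p.1 - 1, p.2)) 0)) ^ 2
          + (max (u p - u (p.1, p.2 + 1)) (max (u p - u (p.1, p.2 - 1)) 0)) ^ 2)
    + (δ / (Real.sqrt 2 * h)) *
      Real.sqrt
        ((max (u p - u (p.1 + 1, p.2 + 1)) (max (u p - u (p.1 - 1, p.2 - 1)) 0)) ^ 2
          + (max (u p - u (p.1 - 1, p.2 + 1)) (max (u p - u (p.1 + 1, p.2 - 1)) 0)) ^ 2)

/-- The nonzero offsets of the punctured 3×3 neighbourhood. -/
noncomputable def puncturedOffsets : Finset (ℤ × ℤ) :=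
  ((Finset.Icc (-1 : ℤ) 1) ×ˢ (Finset.Icc (-1 : ℤ) 1)).erase (0, 0)

lemma puncturedOffsets_nonempty : puncturedOffsets.Nonempty := ⟨(1, 0), by decide⟩

/-! Every one-sided term `max (u p - u q₁) (max (u p - u q₂) 0)` lies in `[0, M]`, where `M` is the
largest drop to a neighbour (or `0`), so each square root is at most `√2 M`. On the diagonal stencil
the weight `1 / (√2 h)` cancels that `√2`. -/

lemma sqrt_sq_add_sq_le_sqrt_two_mul {a b M : ℝ} (ha : 0 ≤ a) (hb : 0 ≤ b)
    (haM : a ≤ M) (hbM : b ≤ M) : √(a ^ 2 + b ^ 2) ≤ √2 * M := by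
  have hM : 0 ≤ M := ha.trans haM
  calc √(a ^ 2 + b ^ 2) ≤ √(2 * M ^ 2) := Real.sqrt_le_sqrt (by nlinarith)
    _ = √2 * M := by rw [Real.sqrt_mul zero_le_two, Real.sqrt_sq hM]

lemma sqrt_sq_max_add_sq_max_le {x₁ x₂ y₁ y₂ M : ℝ} (hM : 0 ≤ M) (hx₁ : x₁ ≤ M) (hx₂ : x₂ ≤ M)
    (hy₁ : y₁ ≤ M) (hy₂ : y₂ ≤ M) :
    √(max x₁ (max x₂ 0) ^ 2 + max y₁ (max y₂ 0) ^ 2) ≤ √2 * M :=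
  sqrt_sq_add_sq_le_sqrt_two_mul (le_max_of_le_right (le_max_right _ _))
    (le_max_of_le_right (le_max_right _ _)) (max_le hx₁ (max_le hx₂ hM))
    (max_le hy₁ (max_le hy₂ hM))

lemma erosionSpeed_nonneg {h δ : ℝ} (hh : 0 ≤ h) (hδ : δ ∈ Set.Icc (0 : ℝ) 1)
    (u : ℤ × ℤ → ℝ) (p : ℤ × ℤ) : 0 ≤ erosionSpeed h δ u p := by
  have h1δ : 0 ≤ 1 - δ := sub_nonneg.2 hδ.2
  have hδ0 : 0 ≤ δ := hδ.1
  unfold erosionSpeed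
  positivity

lemma erosionSpeed_le {h δ M : ℝ} (hh : 0 ≤ h) (hδ : δ ∈ Set.Icc (0 : ℝ) 1) (hM : 0 ≤ M)
    {u : ℤ × ℤ → ℝ} {p : ℤ × ℤ}
    (hnb : ∀ q : ℤ × ℤ, (q.1 - p.1, q.2 - p.2) ∈ puncturedOffsets → u p - u q ≤ M) :
    erosionSpeed h δ u p ≤ ((√2 * (1 - δ) + δ) / h) * M := by
  have haxes := sqrt_sq_max_add_sq_max_le hM (hnb (p.1 + 1, p.2) (by simp; decide))
    (hnb (p.1 - 1, p.2) (by simp; decide)) (hnb (p.1, p.2 + 1) (by simp; decide))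
    (hnb (p.1, p.2 - 1) (by simp; decide))
  have hdiagonals := sqrt_sq_max_add_sq_max_le hM (hnb (p.1 + 1, p.2 + 1) (by simp; decide))
    (hnb (p.1 - 1, p.2 - 1) (by simp; decide)) (hnb (p.1 - 1, p.2 + 1) (by simp; decide))
    (hnb (p.1 + 1, p.2 - 1) (by simp; decide))
  have h1δ : 0 ≤ (1 - δ) / h := div_nonneg (sub_nonneg.2 hδ.2) hh
  have hδh : 0 ≤ δ / (√2 * h) := div_nonneg hδ.1 (by positivity)
  calc erosionSpeed h δ u p
      ≤ (1 - δ) / h * (√2 * M) + δ / (√2 * h) * (√2 * M) :=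
        add_le_add (mul_le_mul_of_nonneg_left haxes h1δ) (mul_le_mul_of_nonneg_left hdiagonals hδh)
    _ = ((√2 * (1 - δ) + δ) / h) * M := by
        field_simp

theorem erosion_speed_bounds
    (h δ : ℝ) (hh : 0 < h) (hδ : δ ∈ Set.Icc (0 : ℝ) 1)
    (u : ℤ × ℤ → ℝ) (p : ℤ × ℤ) :
    0 ≤ erosionSpeed h δ u p ∧
      erosionSpeed h δ u p
        ≤ ((Real.sqrt 2 * (1 - δ) + δ) / h) *
            max 0 (puncturedOffsets.sup' puncturedOffsets_nonempty
                    (fun q => u p - u (p.1 + q.1, p.2 + q.2))) := by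
  refine ⟨erosionSpeed_nonneg hh.le hδ u p, erosionSpeed_le hh.le hδ (le_max_left _ _) ?_⟩
  intro q hq
  calc u p - u q = u p - u (p.1 + (q.1 - p.1), p.2 + (q.2 - p.2)) := by simp
    _ ≤ _ := (Finset.le_sup' (fun q : ℤ × ℤ => u p - u (p.1 + q.1, p.2 + q.2)) hq).trans
        (le_max_right _ _)
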